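/- Let A be a Banach algebra and φ a non-zero multiplicative linear functional on A. If there exists a bounded left A-module morphism θ : A/ker(φ) → A** satisfying φ̃(θ(a + ker φ)) = φ(a) for all a ∈ A, then A is left φ-amenable; explicitly, for any a₀ ∈ A with φ(a₀) = 1, the element m = θ(a₀ + ker φ) satisfies a·m = φ(a)m for all a ∈ A and φ̃(m) = 1 (this is Step 3 of the proof of Lemma 2.1). -/

import Mathlib

/-!
We realize the bidual `(B ⊗_p B)**` of the projective tensor product of a Banach algebra `B`
with itself canonically as the dual of the Banach space `B →L[ℂ] B* ` of bounded bilinear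
forms on `B` (the latter being isometrically isomorphic to `(B ⊗_p B)*`).  All the canonical
Banach `B`-bimodule actions are spelled out explicitly through this identification.
The multiplication of the Banach algebra `B` is encoded as a bounded bilinear map
`μ : B →L[ℂ] B →L[ℂ] B` (for a Banach algebra `A`, `μ = ContinuousLinearMap.mul ℂ A`).
-/

noncomputable section

open ContinuousLinearMap NormedSpace

/-- The space of bounded bilinear forms on `B`, canonically the dual of the projective
tensor product `B ⊗_p B`. -/
abbrev BilForm (B : Type*) [NormedAddCommGroup B] [NormedSpace ℂ B] : Type _ :=
  B →L[ℂ] StrongDual ℂ B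

instance BilForm.instAddCommGroup (B : Type*) [NormedAddCommGroup B] [NormedSpace ℂ B] :
    AddCommGroup (BilForm B) :=
  inferInstance

/-- The bidual of the projective tensor product `B ⊗_p B`, realized canonically as the dual of
the Banach space of bounded bilinear forms on `B`. -/
abbrev TensorBidual (B : Type*) [NormedAddCommGroup B] [NormedSpace ℂ B] : Type _ :=
  StrongDual ℂ (BilForm B)

/-- The bidual `B**` of a normed space `B`. -/
abbrev Bidual (B : Type*) [NormedAddCommGroup B] [NormedSpace ℂ B] : Type _ :=
  StrongDual ℂ (StrongDual ℂ B)

variable {B : Type*} [NormedAddCommGroup B] [NormedSpace ℂ B]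

/-- The left action of `a ∈ B` (with multiplication `μ`) on `(B ⊗_p B)**`:
`(a • T) β = T ((x, y) ↦ β (a x, y))`, the canonical bidual extension of the
`B`-bimodule action `a • (x ⊗ y) = (a x) ⊗ y` on `B ⊗_p B`. -/
def tensorLSmul (μ : B →L[ℂ] B →L[ℂ] B) (a : B) (T : TensorBidual B) : TensorBidual B :=
  T.comp ((compL ℂ B B (StrongDual ℂ B)).flip (μ a))

/-- The right action of `a ∈ B` on `(B ⊗_p B)**`:
`(T • a) β = T ((x, y) ↦ β (x, y a))`, the canonical bidual extension of the
`B`-bimodule action `(x ⊗ y) • a = x ⊗ (y a)` on `B ⊗_p B`. -/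
def tensorRSmul (μ : B →L[ℂ] B →L[ℂ] B) (T : TensorBidual B) (a : B) : TensorBidual B :=
  T.comp (compL ℂ B (StrongDual ℂ B) (StrongDual ℂ B) ((compL ℂ B B ℂ).flip (μ.flip a)))

/-- `π_B^* ψ`, the image of a functional `ψ ∈ B*` under the adjoint of the product
morphism `π_B : B ⊗_p B → B`; as a bilinear form it is `(x, y) ↦ ψ (x y)`.  Thus
`π_B** T ψ = T (piDual μ ψ)` for `T ∈ (B ⊗_p B)**`. -/
def piDual (μ : B →L[ℂ] B →L[ℂ] B) (ψ : StrongDual ℂ B) : BilForm B :=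
  (compL ℂ B B ℂ ψ).comp μ

/-- The left action of `a ∈ B` on the bidual `B**`: `(a • m) f = m (f ∘ (a * ·))`. -/
def bidualLSmul (μ : B →L[ℂ] B →L[ℂ] B) (a : B) (m : Bidual B) : Bidual B :=
  m.comp ((compL ℂ B B ℂ).flip (μ a))

/-- A Banach algebra `B` (with multiplication `μ` and a multiplicative functional `ψ`) is
*left `ψ`-biflat* if there is a bounded linear map `ρ : B → (B ⊗_p B)**` with
`ρ (a b) = ψ (b) ρ (a) = a • ρ (b)` for all `a, b ∈ B`, and `ψ̃ ∘ π_B** ∘ ρ = ψ`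
(note `(ψ̃ ∘ π_B**) T = T (piDual μ ψ)`). -/
def IsLeftBiflat (μ : B →L[ℂ] B →L[ℂ] B) (ψ : StrongDual ℂ B) : Prop :=
  ∃ ρ : B →L[ℂ] TensorBidual B,
    (∀ a b : B, ρ (μ a b) = ψ b • ρ a ∧ ρ (μ a b) = tensorLSmul μ a (ρ b)) ∧
    ∀ a : B, ρ a (piDual μ ψ) = ψ a

/-- A Banach algebra `B` is *left `ψ`-amenable* if there is `m ∈ B**` with
`a • m = ψ (a) m` for all `a ∈ B` and `ψ̃ (m) = m (ψ) = 1`. -/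
def IsLeftAmenable (μ : B →L[ℂ] B →L[ℂ] B) (ψ : StrongDual ℂ B) : Prop :=
  ∃ m : Bidual B, (∀ (a : B) (f : StrongDual ℂ B), m (f.comp (μ a)) = ψ a * m f) ∧ m ψ = 1

variable {A : Type*} [NonUnitalNormedRing A] [NormedSpace ℂ A]
  [IsScalarTower ℂ A A] [SMulCommClass ℂ A A] [CompleteSpace A]

theorem LinearMap.quotKer_mk_eq_smul_mk {R M : Type*} [CommRing R] [AddCommGroup M] [Module R M]
    (f : M →ₗ[R] R) {x₀ : M} (hx₀ : f x₀ = 1) (x : M) :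
    (Submodule.Quotient.mk x : M ⧸ LinearMap.ker f) = f x • Submodule.Quotient.mk x₀ := by
  rw [← Submodule.Quotient.mk_smul, Submodule.Quotient.eq, LinearMap.mem_ker, map_sub, map_smul,
    hx₀, smul_eq_mul, mul_one, sub_self]

theorem bidualLSmul_apply (μ : B →L[ℂ] B →L[ℂ] B) (a : B) (m : Bidual B) (f : StrongDual ℂ B) :
    bidualLSmul μ a m f = m (f.comp (μ a)) :=
  rfl

theorem isLeftAmenable_of_bidualLSmul_eq {μ : B →L[ℂ] B →L[ℂ] B} {ψ : StrongDual ℂ B}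
    (m : Bidual B) (hm : ∀ a : B, bidualLSmul μ a m = ψ a • m) (hψ : m ψ = 1) :
    IsLeftAmenable μ ψ :=
  ⟨m, fun a f => by rw [← bidualLSmul_apply, hm, smul_apply, smul_eq_mul], hψ⟩

/-- `B ⧸ ker ψ` is the line spanned by the class of `a₀`, on which `B` acts through `ψ`, so a left
module morphism out of it sends that class to a `ψ`-invariant vector. -/
theorem bidualLSmul_quotKer_eq_smul {μ : B →L[ℂ] B →L[ℂ] B} {ψ : StrongDual ℂ B}
    (hψ : ∀ a b : B, ψ (μ a b) = ψ a * ψ b)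
    (θ : (B ⧸ LinearMap.ker (ψ : B →ₗ[ℂ] ℂ)) →L[ℂ] Bidual B)
    (hθ : ∀ a b : B, θ (Submodule.Quotient.mk (μ a b)) =
      bidualLSmul μ a (θ (Submodule.Quotient.mk b)))
    {a₀ : B} (ha₀ : ψ a₀ = 1) (a : B) :
    bidualLSmul μ a (θ (Submodule.Quotient.mk a₀)) = ψ a • θ (Submodule.Quotient.mk a₀) := by
  have hψa : ψ (μ a a₀) = ψ a := by rw [hψ, ha₀, mul_one]
  rw [← hθ, LinearMap.quotKer_mk_eq_smul_mk (ψ : B →ₗ[ℂ] ℂ) ha₀, ContinuousLinearMap.coe_coe,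
    hψa, map_smul]

/-- Step 3 of the proof of Lemma 2.1: if there is a bounded left
`A`-module morphism `θ : A ⧸ ker φ → A**` with `φ̃ (θ (a + ker φ)) = φ (a)` for all `a`,
then `A` is left `φ`-amenable; explicitly, for any `a₀ ∈ A` with `φ (a₀) = 1`, the element
`m = θ (a₀ + ker φ)` satisfies `a • m = φ (a) m` for all `a ∈ A` and `φ̃ (m) = 1`. -/
theorem left_phi_amenable_of_module_morphism
    (φ : A →L[ℂ] ℂ) (hφ_ne : φ ≠ 0)
    (hφ_mul : ∀ a b : A, φ (a * b) = φ a * φ b)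
    (θ : (A ⧸ LinearMap.ker (φ : A →ₗ[ℂ] ℂ)) →L[ℂ] Bidual A)
    (hθ_mod : ∀ a b : A, θ (Submodule.Quotient.mk (a * b)) =
      bidualLSmul (ContinuousLinearMap.mul ℂ A) a (θ (Submodule.Quotient.mk b)))
    (hθ_val : ∀ a : A, θ (Submodule.Quotient.mk a) φ = φ a) :
    IsLeftAmenable (ContinuousLinearMap.mul ℂ A) φ ∧
    ∀ a₀ : A, φ a₀ = 1 →
      (∀ a : A, bidualLSmul (ContinuousLinearMap.mul ℂ A) a (θ (Submodule.Quotient.mk a₀)) =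
        φ a • θ (Submodule.Quotient.mk a₀)) ∧
      θ (Submodule.Quotient.mk a₀) φ = 1 := by
  have invariant {a₀ : A} (ha₀ : φ a₀ = 1) (a : A) :=
    bidualLSmul_quotKer_eq_smul (μ := ContinuousLinearMap.mul ℂ A) hφ_mul θ hθ_mod ha₀ a
  have normalized (a₀ : A) (ha₀ : φ a₀ = 1) : θ (Submodule.Quotient.mk a₀) φ = 1 := by
    rw [hθ_val, ha₀]
  obtain ⟨a₀, ha₀⟩ := LinearMap.surjective (ContinuousLinearMap.coe_injective.ne hφ_ne) 1
  exact ⟨isLeftAmenable_of_bidualLSmul_eq _ (invariant ha₀) (normalized a₀ ha₀),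
    fun a₀ ha₀ => ⟨invariant ha₀, normalized a₀ ha₀⟩⟩
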